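/- Let H be a well-founded positive analytic system with generating function solution Y and radius of convergence ρ. Let 0 ≤ a ≤ ρ be such that the series Y_i converge at a and the series defining H and the entries of ∂H/∂Y converge absolutely at (a,Y(a)). Let D ∈ ℝ^m have all coordinates positive and satisfy ∂H/∂Y(a,Y(a))·D = Λ·D for some Λ ≤ 1. Let y ∈ ℝ^m satisfy 0 ≤ y ≤ Y(a) componentwise, (a,y) ∈ D(H), and suppose the spectral radius of ∂H/∂Y(a,y) is strictly less than 1; set y' := y + (I − ∂H/∂Y(a,y))^{-1}·(H(a,y) − y). If μ > 0 and Y(a) − y ≤ μ·D componentwise, then Y(a) − y' ≤ (μ/2)·D componentwise. -/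

import Mathlib

open scoped ENNReal NNReal Topology
open Filter

namespace AnalyticComb

/-- A positive analytic system in dimension `m`: nonnegative real coefficients indexed by
multi-indices in `ℕ^{m+1}`. -/
structure PosSystem (m : ℕ) where
  c : Fin m → (Fin (m + 1) → ℕ) → ℝ
  nonneg : ∀ i d, 0 ≤ c i d

variable {m : ℕ}

/-- The point `(z, Y) ∈ ℝ^{m+1}`. -/
def vec (z : ℝ) (Y : Fin m → ℝ) : Fin (m + 1) → ℝ := Fin.cons z Y

/-- General term of the series defining `H_i` at `x`. -/
def term (S : PosSystem m) (i : Fin m) (x : Fin (m + 1) → ℝ) (d : Fin (m + 1) → ℕ) : ℝ :=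
  S.c i d * ∏ j, x j ^ d j

/-- `x` belongs to the domain of convergence `D(H)`: all `m` series converge absolutely. -/
def ConvAt (S : PosSystem m) (x : Fin (m + 1) → ℝ) : Prop :=
  ∀ i, Summable fun d => |term S i x d|

/-- The value `H(x) ∈ ℝ^m`. -/
noncomputable def Hval (S : PosSystem m) (x : Fin (m + 1) → ℝ) : Fin m → ℝ :=
  fun i => ∑' d, term S i x d

/-- General term of the termwise-differentiated series `∂H_i/∂Y_j` at `x`. -/
def jacTerm (S : PosSystem m) (i j : Fin m) (x : Fin (m + 1) → ℝ)
    (d : Fin (m + 1) → ℕ) : ℝ :=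
  S.c i d * (d j.succ : ℝ) * ∏ k, x k ^ (if k = j.succ then d k - 1 else d k)

/-- Absolute convergence of all entries of the Jacobian `∂H/∂Y` at `x`. -/
def JacConvAt (S : PosSystem m) (x : Fin (m + 1) → ℝ) : Prop :=
  ∀ i j, Summable fun d => |jacTerm S i j x d|

/-- The Jacobian matrix `∂H/∂Y(x)`. -/
noncomputable def jac (S : PosSystem m) (x : Fin (m + 1) → ℝ) : Matrix (Fin m) (Fin m) ℝ :=
  Matrix.of fun i j => ∑' d, jacTerm S i j x d

/-- Entries of the Jacobian, as sums in `[0,+∞]` (convention `∞·0 = 0`). -/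
noncomputable def jacEnn (S : PosSystem m) (x : Fin (m + 1) → ℝ) (i j : Fin m) : ℝ≥0∞ :=
  ∑' d, ENNReal.ofReal (jacTerm S i j x d)

/-- General term of the termwise twice-differentiated series `∂²H_l/∂Y_i∂Y_j` at `x`. -/
def jac2Term (S : PosSystem m) (l i j : Fin m) (x : Fin (m + 1) → ℝ)
    (d : Fin (m + 1) → ℕ) : ℝ :=
  S.c l d * (d i.succ : ℝ) * ((d j.succ - if i = j then 1 else 0 : ℕ) : ℝ) *
    ∏ k, x k ^ (d k - (if k = i.succ then 1 else 0) - (if k = j.succ then 1 else 0))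

/-- The value of `∂²H_l/∂Y_i∂Y_j` at `x`. -/
noncomputable def jac2 (S : PosSystem m) (l i j : Fin m) (x : Fin (m + 1) → ℝ) : ℝ :=
  ∑' d, jac2Term S l i j x d

/-- Spectral radius: largest modulus of a complex eigenvalue of a real matrix. -/
noncomputable def specRad {n : Type*} [Fintype n] [DecidableEq n] (A : Matrix n n ℝ) : ℝ≥0∞ :=
  spectralRadius ℂ (A.map Complex.ofReal)

/-- `Λ_H(x)`: spectral radius of the Jacobian matrix at `x`. -/
noncomputable def lambda (S : PosSystem m) (x : Fin (m + 1) → ℝ) : ℝ≥0∞ :=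
  specRad (jac S x)

/-- The iterates `U^{[k]}` (`U^{[0]} = 0`, `U^{[k+1]} = H(0, U^{[k]})`). -/
noncomputable def uIter (S : PosSystem m) : ℕ → Fin m → ℝ
  | 0 => 0
  | k + 1 => Hval S (vec 0 (uIter S k))

/-- The system is well founded. -/
def IsWF (S : PosSystem m) : Prop :=
  (∀ k ≤ m, ConvAt S (vec 0 (uIter S k))) ∧
    JacConvAt S (vec 0 (uIter S m)) ∧
    IsNilpotent (jac S (vec 0 (uIter S m)))

/-- The system is linear: no coefficient with total `Y`-degree at least `2`. -/
def IsLinear (S : PosSystem m) : Prop :=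
  ∀ i d, 2 ≤ ∑ j : Fin m, d j.succ → S.c i d = 0

/-- `∂H_i/∂Y_j` is not identically zero on `D(H)`. -/
def DependsOn (S : PosSystem m) (i j : Fin m) : Prop :=
  ∃ x : Fin (m + 1) → ℝ, ConvAt S x ∧ (Summable fun d => |jacTerm S i j x d|) ∧
    jac S x i j ≠ 0

/-- For every pair `(i,j)` there is a chain `i = i₀, …, i_k = j`, `k ≥ 1`, of nonvanishing
partial derivatives. -/
def StronglyConnected (S : PosSystem m) : Prop :=
  ∀ i j : Fin m, ∃ k : ℕ, 1 ≤ k ∧ ∃ p : Fin (k + 1) → Fin m,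
    p 0 = i ∧ p (Fin.last k) = j ∧ ∀ t : Fin k, DependsOn S (p t.castSucc) (p t.succ)

/-- Radius of convergence of a real power series given by its coefficients. -/
noncomputable def radius (a : ℕ → ℝ) : ℝ≥0∞ :=
  ⨆ (r : ℝ≥0) (_ : Summable fun n => |a n| * (r : ℝ) ^ n), (r : ℝ≥0∞)

/-- Evaluation of a vector of power series at a real point. -/
noncomputable def eval (y : Fin m → ℕ → ℝ) (x : ℝ) : Fin m → ℝ :=
  fun i => ∑' n, y i n * x ^ n

/-- Convergence of all the coordinate power series at `x`. -/
def EvalConv (y : Fin m → ℕ → ℝ) (x : ℝ) : Prop :=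
  ∀ i, Summable fun n => y i n * x ^ n

/-- A generating function solution of a (well-founded) system. -/
structure GFSol (S : PosSystem m) where
  y : Fin m → ℕ → ℝ
  nonneg : ∀ i n, 0 ≤ y i n
  rad_pos : 0 < ⨅ i, radius (y i)
  init : eval y 0 = uIter S m
  conv : ∀ x : ℝ, 0 ≤ x → ENNReal.ofReal x < ⨅ i, radius (y i) →
    ConvAt S (vec x (eval y x))
  fixed : ∀ x : ℝ, 0 ≤ x → ENNReal.ofReal x < ⨅ i, radius (y i) →
    eval y x = Hval S (vec x (eval y x))

/-- The radius of convergence `ρ` of the solution. -/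
noncomputable def GFSol.rad {S : PosSystem m} (sol : GFSol S) : ℝ≥0∞ :=
  ⨅ i, radius (sol.y i)

/-- The system is zero-free: no coordinate of the solution is the zero power series. -/
def GFSol.ZeroFree {S : PosSystem m} (sol : GFSol S) : Prop :=
  ∀ i, ∃ n, sol.y i n ≠ 0

/-- The system is irreducible. -/
def GFSol.Irreducible {S : PosSystem m} (sol : GFSol S) : Prop :=
  IsWF S ∧ sol.ZeroFree ∧ StronglyConnected S

/-- `τ_i = lim_{x→ρ⁻} Y_i(x) ∈ [0,+∞]`, as a monotone supremum. -/
noncomputable def GFSol.tau {S : PosSystem m} (sol : GFSol S) (i : Fin m) : ℝ≥0∞ :=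
  ⨆ (x : ℝ) (_ : 0 ≤ x) (_ : ENNReal.ofReal x < sol.rad), ENNReal.ofReal (eval sol.y x i)

/-- The Newton iterates at `a`. -/
noncomputable def newton (S : PosSystem m) (a : ℝ) : ℕ → Fin m → ℝ
  | 0 => 0
  | n + 1 =>
      newton S a n +
        ((1 - jac S (vec a (newton S a n)))⁻¹).mulVec
          (Hval S (vec a (newton S a n)) - newton S a n)

/-- The Newton step at `y^{[k]}` is legitimate, so that `y^{[k+1]}` is defined. -/
def NewtonStepOK (S : PosSystem m) (a : ℝ) (k : ℕ) : Prop :=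
  ConvAt S (vec a (newton S a k)) ∧ JacConvAt S (vec a (newton S a k)) ∧
    IsUnit (1 - jac S (vec a (newton S a k))).det

/-- The characteristic map `F(z,Y) = (Y − H(z,Y), det(I − ∂H/∂Y(z,Y)))`. -/
noncomputable def fchar (S : PosSystem m) (x : Fin (m + 1) → ℝ) : Fin (m + 1) → ℝ :=
  Fin.snoc (fun i : Fin m => x i.succ - Hval S x i) ((1 - jac S x).det)

/-- The Jacobian matrix of the characteristic map. -/
noncomputable def jchar (S : PosSystem m) (x : Fin (m + 1) → ℝ) :
    Matrix (Fin (m + 1)) (Fin (m + 1)) ℝ :=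
  Matrix.of fun i j => fderiv ℝ (fchar S) x (Pi.single j (1 : ℝ)) i

/-- The map `F(z,Y) = (Y − H(z,Y), Y₁ − 1)`. -/
noncomputable def fone (S : PosSystem m) (x : Fin (m + 1) → ℝ) : Fin (m + 1) → ℝ :=
  Fin.snoc (fun i : Fin m => x i.succ - Hval S x i) (x 1 - 1)

/-- The Jacobian matrix of `fone`. -/
noncomputable def jone (S : PosSystem m) (x : Fin (m + 1) → ℝ) :
    Matrix (Fin (m + 1)) (Fin (m + 1)) ℝ :=
  Matrix.of fun i j => fderiv ℝ (fone S) x (Pi.single j (1 : ℝ)) i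

/-- Term of the Jacobian entries at a complex point. -/
def jacTermC (S : PosSystem m) (i j : Fin m) (x : Fin (m + 1) → ℂ)
    (d : Fin (m + 1) → ℕ) : ℂ :=
  (S.c i d : ℂ) * (d j.succ : ℂ) * ∏ k, x k ^ (if k = j.succ then d k - 1 else d k)

/-- The Jacobian matrix at a complex point. -/
noncomputable def jacC (S : PosSystem m) (x : Fin (m + 1) → ℂ) : Matrix (Fin m) (Fin m) ℂ :=
  Matrix.of fun i j => ∑' d, jacTermC S i j x d

/-- Evaluation of the solution at a complex point. -/
noncomputable def evalC (y : Fin m → ℕ → ℝ) (w : ℂ) : Fin m → ℂ :=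
  fun i => ∑' n, (y i n : ℂ) * w ^ n

/-- `α` (on the circle `|w| = ρ`) is a singularity of the solution: some coordinate admits
no analytic continuation to a neighborhood of `α`. -/
def IsSingularity {S : PosSystem m} (sol : GFSol S) (ρ : ℝ) (α : ℂ) : Prop :=
  ∃ i : Fin m, ¬ ∃ (U : Set ℂ) (g : ℂ → ℂ), IsOpen U ∧ α ∈ U ∧
    (∀ w ∈ U, AnalyticAt ℂ g w) ∧ ∀ w ∈ U ∩ Metric.ball (0 : ℂ) ρ, g w = evalC sol.y w i

/-- `q` is the period of the power series with coefficient sequence `a`: the differences of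
elements of the support generate the subgroup `qℤ` of `ℤ`. -/
def HasPeriod (a : ℕ → ℝ) (q : ℕ) : Prop :=
  (∀ n n' : ℕ, a n ≠ 0 → a n' ≠ 0 → (q : ℤ) ∣ (n : ℤ) - (n' : ℤ)) ∧
    ∀ q' : ℕ, (∀ n n' : ℕ, a n ≠ 0 → a n' ≠ 0 → (q' : ℤ) ∣ (n : ℤ) - (n' : ℤ)) → q' ∣ q

/-- Valuation: index of the first nonzero coefficient. -/
noncomputable def sVal (a : ℕ → ℝ) : ℕ := sInf {n | a n ≠ 0}

section TrapezoidPoly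

open Polynomial Finset

lemma derivFinsetProd {ι : Type*} [DecidableEq ι] (s : Finset ι) (f : ι → Polynomial ℝ) :
    Polynomial.derivative (∏ b ∈ s, f b) =
      ∑ b ∈ s, (∏ a ∈ s.erase b, f a) * Polynomial.derivative (f b) := by
  classical
  induction s using Finset.induction_on with
  | empty => simp
  | @insert i s hi ih =>
      rw [Finset.prod_insert hi, Polynomial.derivative_mul, ih, Finset.sum_insert hi,
        Finset.erase_insert hi, Finset.mul_sum, mul_comm (Polynomial.derivative (f i))]
      congr 1
      apply Finset.sum_congr rfl
      intro b hb
      rw [Finset.erase_insert_of_ne (by rintro rfl; exact hi hb),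
        Finset.prod_insert (fun h => hi (Finset.mem_of_mem_erase h))]
      ring

lemma coeffNonneg_mul {p q : Polynomial ℝ} (hp : ∀ n, 0 ≤ p.coeff n) (hq : ∀ n, 0 ≤ q.coeff n) :
    ∀ n, 0 ≤ (p * q).coeff n := by
  intro n
  rw [Polynomial.coeff_mul]
  exact Finset.sum_nonneg fun x _ => mul_nonneg (hp _) (hq _)

lemma coeffNonneg_pow {p : Polynomial ℝ} (hp : ∀ n, 0 ≤ p.coeff n) (d : ℕ) :
    ∀ n, 0 ≤ (p ^ d).coeff n := by
  induction d with
  | zero => intro n; rw [pow_zero, Polynomial.coeff_one]; split <;> norm_num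
  | succ d ih => rw [pow_succ]; exact coeffNonneg_mul ih hp

lemma coeffNonneg_prod {ι : Type*} (s : Finset ι) (f : ι → Polynomial ℝ)
    (h : ∀ i ∈ s, ∀ n, 0 ≤ (f i).coeff n) : ∀ n, 0 ≤ (∏ i ∈ s, f i).coeff n := by
  classical
  induction s using Finset.induction_on with
  | empty => intro n; rw [Finset.prod_empty, Polynomial.coeff_one]; split <;> norm_num
  | @insert i s hi ih =>
      rw [Finset.prod_insert hi]
      exact coeffNonneg_mul (h i (Finset.mem_insert_self i s))
        (ih fun j hj => h j (Finset.mem_insert_of_mem hj))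

lemma seq_trapezoid (c : ℕ → ℝ) (hc : ∀ n, 0 ≤ c n) (M : ℕ) :
    ∑ i ∈ Finset.range M, c (i + 1) ≤
      (1 / 2) * (c 1 + ∑ i ∈ Finset.range M, c (i + 1) * ((i : ℝ) + 1)) := by
  induction M with
  | zero => simp; linarith [hc 1]
  | succ M ih =>
      rcases Nat.eq_zero_or_pos M with rfl | hM
      · simp; linarith [hc 1]
      · rw [Finset.sum_range_succ, Finset.sum_range_succ]
        have h2 : (2 : ℝ) ≤ (M : ℝ) + 1 := by
          have : (1 : ℝ) ≤ (M : ℝ) := by exact_mod_cast hM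
          linarith
        nlinarith [ih, hc (M + 1)]

/-- Trapezoid inequality for polynomials with nonnegative coefficients. -/
lemma poly_trapezoid (p : Polynomial ℝ) (hp : ∀ n, 0 ≤ p.coeff n) :
    p.eval 1 - p.eval 0 ≤
      (1 / 2) * ((Polynomial.derivative p).eval 0 + (Polynomial.derivative p).eval 1) := by
  set N := p.natDegree with hN
  have h1 : p.eval 1 = ∑ i ∈ Finset.range (N + 1 + 1), p.coeff i := by
    rw [Polynomial.eval_eq_sum_range' (by omega : p.natDegree < N + 1 + 1)]
    simp
  have h0 : p.eval 0 = p.coeff 0 := (Polynomial.coeff_zero_eq_eval_zero p).symm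
  have hd0 : (Polynomial.derivative p).eval 0 = p.coeff 1 := by
    rw [← Polynomial.coeff_zero_eq_eval_zero, Polynomial.coeff_derivative]
    norm_num
  have hdlt : (Polynomial.derivative p).natDegree < N + 1 + 1 := by
    have := Polynomial.natDegree_derivative_le p
    omega
  have hd1 : (Polynomial.derivative p).eval 1 =
      ∑ i ∈ Finset.range (N + 1 + 1), p.coeff (i + 1) * ((i : ℝ) + 1) := by
    rw [Polynomial.eval_eq_sum_range' hdlt 1]
    simp [Polynomial.coeff_derivative]
  rw [h1, h0, hd0, hd1, Finset.sum_range_succ' (fun i => p.coeff i) (N + 1)]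
  have key := seq_trapezoid (fun n => p.coeff n) hp (N + 1)
  have hdrop : ∑ i ∈ Finset.range (N + 1), p.coeff (i + 1) * ((i : ℝ) + 1) ≤
      ∑ i ∈ Finset.range (N + 1 + 1), p.coeff (i + 1) * ((i : ℝ) + 1) := by
    rw [Finset.sum_range_succ (fun i => p.coeff (i + 1) * ((i : ℝ) + 1)) (N + 1)]
    have : (0 : ℝ) ≤ p.coeff (N + 1 + 1) * ((N : ℝ) + 1 + 1) := by
      apply mul_nonneg (hp _); positivity
    push_cast
    linarith
  push_cast at *
  linarith

end TrapezoidPoly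

section Basic

lemma vec_succ (a : ℝ) (y : Fin m → ℝ) (j : Fin m) : vec a y j.succ = y j := by
  simp [vec]

lemma vec_zero' (a : ℝ) (y : Fin m → ℝ) : vec a y 0 = a := rfl

lemma vec_nonneg {a : ℝ} {y : Fin m → ℝ} (ha : 0 ≤ a) (hy : ∀ j, 0 ≤ y j) :
    ∀ k, 0 ≤ vec a y k := by
  intro k
  induction k using Fin.cases with
  | zero => exact ha
  | succ j => simpa [vec] using hy j

lemma vec_le {a : ℝ} {y Y : Fin m → ℝ} (h : ∀ j, y j ≤ Y j) :
    ∀ k, vec a y k ≤ vec a Y k := by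
  intro k
  induction k using Fin.cases with
  | zero => exact le_refl a
  | succ j => simpa [vec] using h j

lemma vec_le' {a a' : ℝ} (haa' : a ≤ a') {y Y : Fin m → ℝ} (h : ∀ j, y j ≤ Y j) :
    ∀ k, vec a y k ≤ vec a' Y k := by
  intro k
  induction k using Fin.cases with
  | zero => exact haa'
  | succ j => simpa [vec] using h j

lemma term_nonneg (S : PosSystem m) (i : Fin m) {x : Fin (m + 1) → ℝ} (hx : ∀ k, 0 ≤ x k)
    (d : Fin (m + 1) → ℕ) : 0 ≤ term S i x d :=
  mul_nonneg (S.nonneg i d) (Finset.prod_nonneg fun k _ => pow_nonneg (hx k) _)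

lemma jacTerm_nonneg (S : PosSystem m) (i j : Fin m) {x : Fin (m + 1) → ℝ}
    (hx : ∀ k, 0 ≤ x k) (d : Fin (m + 1) → ℕ) : 0 ≤ jacTerm S i j x d :=
  mul_nonneg (mul_nonneg (S.nonneg i d) (Nat.cast_nonneg _))
    (Finset.prod_nonneg fun k _ => pow_nonneg (hx k) _)

lemma term_mono (S : PosSystem m) (i : Fin m) {x x' : Fin (m + 1) → ℝ} (hx : ∀ k, 0 ≤ x k)
    (h : ∀ k, x k ≤ x' k) (d : Fin (m + 1) → ℕ) : term S i x d ≤ term S i x' d :=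
  mul_le_mul_of_nonneg_left
    (Finset.prod_le_prod (fun k _ => pow_nonneg (hx k) _)
      (fun k _ => pow_le_pow_left₀ (hx k) (h k) _)) (S.nonneg i d)

lemma jacTerm_mono (S : PosSystem m) (i j : Fin m) {x x' : Fin (m + 1) → ℝ}
    (hx : ∀ k, 0 ≤ x k) (h : ∀ k, x k ≤ x' k) (d : Fin (m + 1) → ℕ) :
    jacTerm S i j x d ≤ jacTerm S i j x' d :=
  mul_le_mul_of_nonneg_left
    (Finset.prod_le_prod (fun k _ => pow_nonneg (hx k) _)
      (fun k _ => pow_le_pow_left₀ (hx k) (h k) _))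
    (mul_nonneg (S.nonneg i d) (Nat.cast_nonneg _))

end Basic

section Monomial

open Polynomial

lemma coeffNonneg_linear {a b : ℝ} (ha : 0 ≤ a) (hb : 0 ≤ b) (n : ℕ) :
    0 ≤ (Polynomial.C a + Polynomial.C b * Polynomial.X).coeff n := by
  rw [Polynomial.coeff_add, Polynomial.coeff_C, Polynomial.coeff_C_mul_X]
  split_ifs <;> simp_all

lemma prod_pow_ite (x : Fin (m + 1) → ℝ) (d : Fin (m + 1) → ℕ) (k0 : Fin (m + 1)) :
    (∏ l, x l ^ (if l = k0 then d l - 1 else d l)) =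
      x k0 ^ (d k0 - 1) * ∏ l ∈ Finset.univ.erase k0, x l ^ d l := by
  rw [← Finset.mul_prod_erase Finset.univ _ (Finset.mem_univ k0), if_pos rfl]
  congr 1
  exact Finset.prod_congr rfl fun l hl => by rw [if_neg (Finset.ne_of_mem_erase hl)]

lemma monomial_trapezoid (u v : Fin (m + 1) → ℝ) (hu : ∀ k, 0 ≤ u k)
    (huv : ∀ k, u k ≤ v k) (d : Fin (m + 1) → ℕ) :
    (∏ k, v k ^ d k) - (∏ k, u k ^ d k) ≤
      (1 / 2) * ∑ k, ((d k : ℝ) * (v k - u k) *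
        ((∏ l, u l ^ (if l = k then d l - 1 else d l)) +
          (∏ l, v l ^ (if l = k then d l - 1 else d l)))) := by
  classical
  set e : Fin (m + 1) → ℝ := fun k => v k - u k with he
  set p : Polynomial ℝ :=
    ∏ k, (Polynomial.C (u k) + Polynomial.C (e k) * Polynomial.X) ^ (d k) with hp
  have hcoeff : ∀ n, 0 ≤ p.coeff n := by
    apply coeffNonneg_prod
    intro k _
    exact coeffNonneg_pow (coeffNonneg_linear (hu k) (by simp [he]; linarith [huv k])) _
  have hev : ∀ t : ℝ, p.eval t = ∏ k, (u k + e k * t) ^ d k := by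
    intro t
    simp [hp, Polynomial.eval_prod]
  have hev0 : p.eval 0 = ∏ k, u k ^ d k := by simp [hev]
  have hev1 : p.eval 1 = ∏ k, v k ^ d k := by
    rw [hev 1]
    exact Finset.prod_congr rfl fun k _ => by simp [he]
  have hder : ∀ t : ℝ, (Polynomial.derivative p).eval t = ∑ k,
      (∏ l ∈ Finset.univ.erase k, (u l + e l * t) ^ d l) *
        ((d k : ℝ) * (u k + e k * t) ^ (d k - 1) * e k) := by
    intro t
    rw [hp, derivFinsetProd, Polynomial.eval_finset_sum]
    apply Finset.sum_congr rfl
    intro k _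
    rw [Polynomial.derivative_pow]
    simp only [Polynomial.derivative_add, Polynomial.derivative_C,
      Polynomial.derivative_C_mul_X, zero_add, Polynomial.eval_mul, Polynomial.eval_pow,
      Polynomial.eval_add, Polynomial.eval_C, Polynomial.eval_X, Polynomial.eval_prod,
      Polynomial.eval_natCast]
  have hD0 : (Polynomial.derivative p).eval 0 = ∑ k, (d k : ℝ) * e k *
      (∏ l, u l ^ (if l = k then d l - 1 else d l)) := by
    rw [hder 0]
    apply Finset.sum_congr rfl
    intro k _
    rw [prod_pow_ite]
    simp only [mul_zero, add_zero]
    ring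
  have hD1 : (Polynomial.derivative p).eval 1 = ∑ k, (d k : ℝ) * e k *
      (∏ l, v l ^ (if l = k then d l - 1 else d l)) := by
    rw [hder 1]
    apply Finset.sum_congr rfl
    intro k _
    rw [prod_pow_ite]
    have hve : ∀ l, u l + e l * 1 = v l := fun l => by simp [he]
    simp only [hve]
    ring
  have := poly_trapezoid p hcoeff
  rw [hev0, hev1, hD0, hD1] at this
  refine this.trans (le_of_eq ?_)
  rw [← Finset.sum_add_distrib]
  congr 1
  apply Finset.sum_congr rfl
  intro k _
  simp [he]
  ring

lemma term_trapezoid (S : PosSystem m) (i : Fin m) {a : ℝ} {y Y : Fin m → ℝ}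
    (ha : 0 ≤ a) (hy : ∀ j, 0 ≤ y j) (hyY : ∀ j, y j ≤ Y j) (d : Fin (m + 1) → ℕ) :
    term S i (vec a Y) d - term S i (vec a y) d ≤
      (1 / 2) * ∑ j : Fin m,
        (jacTerm S i j (vec a y) d + jacTerm S i j (vec a Y) d) * (Y j - y j) := by
  classical
  have key := monomial_trapezoid (vec a y) (vec a Y) (vec_nonneg ha hy) (vec_le hyY) d
  have hc := S.nonneg i d
  have hmul := mul_le_mul_of_nonneg_left key hc
  have hsum : ∑ k : Fin (m + 1), ((d k : ℝ) * (vec a Y k - vec a y k) *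
      ((∏ l, (vec a y) l ^ (if l = k then d l - 1 else d l)) +
        (∏ l, (vec a Y) l ^ (if l = k then d l - 1 else d l)))) =
      ∑ j : Fin m, ((d j.succ : ℝ) * (Y j - y j) *
      ((∏ l, (vec a y) l ^ (if l = j.succ then d l - 1 else d l)) +
        (∏ l, (vec a Y) l ^ (if l = j.succ then d l - 1 else d l)))) := by
    rw [Fin.sum_univ_succ]
    have h0 : vec a Y 0 - vec a y 0 = 0 := by simp [vec]
    rw [h0]
    simp only [mul_zero, zero_mul, mul_comm, zero_add, vec_succ]
  rw [hsum] at hmul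
  have h2 : S.c i d * ((1 / 2) * ∑ j : Fin m, ((d j.succ : ℝ) * (Y j - y j) *
      ((∏ l, (vec a y) l ^ (if l = j.succ then d l - 1 else d l)) +
        (∏ l, (vec a Y) l ^ (if l = j.succ then d l - 1 else d l))))) =
      (1 / 2) * ∑ j : Fin m,
        (jacTerm S i j (vec a y) d + jacTerm S i j (vec a Y) d) * (Y j - y j) := by
    rw [mul_left_comm, Finset.mul_sum]
    congr 1
    apply Finset.sum_congr rfl
    intro j _
    unfold jacTerm
    ring
  rw [h2] at hmul
  refine le_trans (le_of_eq ?_) hmul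
  unfold term
  ring

end Monomial

section Sums

lemma Hval_nonneg (S : PosSystem m) (i : Fin m) {x : Fin (m + 1) → ℝ} (hx : ∀ k, 0 ≤ x k) :
    0 ≤ Hval S x i :=
  tsum_nonneg fun d => term_nonneg S i hx d

lemma jac_nonneg (S : PosSystem m) {x : Fin (m + 1) → ℝ} (hx : ∀ k, 0 ≤ x k) (i j : Fin m) :
    0 ≤ jac S x i j :=
  tsum_nonneg fun d => jacTerm_nonneg S i j hx d

lemma jac_mono (S : PosSystem m) {x x' : Fin (m + 1) → ℝ} (i j : Fin m) (hx : ∀ k, 0 ≤ x k)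
    (h : ∀ k, x k ≤ x' k) (hs : Summable fun d => |jacTerm S i j x d|)
    (hs' : Summable fun d => |jacTerm S i j x' d|) :
    jac S x i j ≤ jac S x' i j :=
  Summable.tsum_le_tsum (jacTerm_mono S i j hx h) hs.of_abs hs'.of_abs

lemma Hval_mono (S : PosSystem m) (i : Fin m) {x x' : Fin (m + 1) → ℝ} (hx : ∀ k, 0 ≤ x k)
    (h : ∀ k, x k ≤ x' k) (hs : Summable fun d => |term S i x d|)
    (hs' : Summable fun d => |term S i x' d|) :
    Hval S x i ≤ Hval S x' i :=
  Summable.tsum_le_tsum (term_mono S i hx h) hs.of_abs hs'.of_abs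

/-- Summing the trapezoid inequality over all multi-indices. -/
lemma Hval_trapezoid (S : PosSystem m) {a : ℝ} {y Y : Fin m → ℝ} (ha : 0 ≤ a)
    (hy : ∀ j, 0 ≤ y j) (hyY : ∀ j, y j ≤ Y j)
    (hCy : ConvAt S (vec a y)) (hCY : ConvAt S (vec a Y))
    (hJy : JacConvAt S (vec a y)) (hJY : JacConvAt S (vec a Y)) (i : Fin m) :
    Hval S (vec a Y) i - Hval S (vec a y) i ≤
      (1 / 2) * ∑ j, (jac S (vec a y) i j + jac S (vec a Y) i j) * (Y j - y j) := by
  have hsY : Summable (term S i (vec a Y)) := (hCY i).of_abs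
  have hsy : Summable (term S i (vec a y)) := (hCy i).of_abs
  have hsub : Summable (fun d => term S i (vec a Y) d - term S i (vec a y) d) := hsY.sub hsy
  have hj : ∀ j : Fin m, Summable (fun d =>
      (jacTerm S i j (vec a y) d + jacTerm S i j (vec a Y) d) * (Y j - y j)) := fun j =>
    (((hJy i j).of_abs.add (hJY i j).of_abs).mul_right _)
  have hrhs : Summable (fun d => (1 / 2 : ℝ) * ∑ j,
      (jacTerm S i j (vec a y) d + jacTerm S i j (vec a Y) d) * (Y j - y j)) :=
    (summable_sum fun j _ => hj j).mul_left _
  have hmain := Summable.tsum_le_tsum (term_trapezoid S i ha hy hyY) hsub hrhs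
  rw [Summable.tsum_sub hsY hsy] at hmain
  rw [tsum_mul_left, Summable.tsum_finsetSum (fun j _ => hj j)] at hmain
  refine hmain.trans (le_of_eq ?_)
  congr 1
  apply Finset.sum_congr rfl
  intro j _
  rw [tsum_mul_right, Summable.tsum_add ((hJy i j).of_abs) ((hJY i j).of_abs)]
  rfl

end Sums

section EvalFacts

lemma eval_nonneg {y : Fin m → ℕ → ℝ} (hnn : ∀ i n, 0 ≤ y i n) {x : ℝ} (hx : 0 ≤ x)
    (i : Fin m) : 0 ≤ eval y x i :=
  tsum_nonneg fun n => mul_nonneg (hnn i n) (pow_nonneg hx n)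

lemma coeff_summable_of_le {c : ℕ → ℝ} (h : ∀ n, 0 ≤ c n) {x x' : ℝ} (hx : 0 ≤ x)
    (hxx' : x ≤ x') (hs : Summable fun n => c n * x' ^ n) : Summable fun n => c n * x ^ n :=
  hs.of_nonneg_of_le (fun n => mul_nonneg (h n) (pow_nonneg hx n))
    (fun n => mul_le_mul_of_nonneg_left (pow_le_pow_left₀ hx hxx' n) (h n))

lemma eval_le {y : Fin m → ℕ → ℝ} (hnn : ∀ i n, 0 ≤ y i n) {x x' : ℝ} (hx : 0 ≤ x)
    (hxx' : x ≤ x') (hs : ∀ i, Summable fun n => y i n * x' ^ n) (i : Fin m) :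
    eval y x i ≤ eval y x' i :=
  Summable.tsum_le_tsum
    (fun n => mul_le_mul_of_nonneg_left (pow_le_pow_left₀ hx hxx' n) (hnn i n))
    (coeff_summable_of_le (hnn i) hx hxx' (hs i)) (hs i)

end EvalFacts

section Fixpoint

lemma uIter_nonneg (S : PosSystem m) : ∀ k i, 0 ≤ uIter S k i := by
  intro k
  induction k with
  | zero => intro i; exact le_refl 0
  | succ k ih =>
      intro i
      exact Hval_nonneg S i (vec_nonneg (le_refl 0) ih)

lemma uIter_le_next (S : PosSystem m) (hwf : IsWF S) :
    ∀ k, k ≤ m → ∀ i, uIter S k i ≤ Hval S (vec 0 (uIter S k)) i := by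
  intro k
  induction k with
  | zero => intro _ i; exact Hval_nonneg S i (vec_nonneg (le_refl 0) (uIter_nonneg S 0))
  | succ k ih =>
      intro hk i
      show Hval S (vec 0 (uIter S k)) i ≤ _
      exact Hval_mono S i (vec_nonneg (le_refl 0) (uIter_nonneg S k))
        (vec_le (ih (by omega)))
        (hwf.1 k (by omega) i) (hwf.1 (k + 1) hk i)

/-- At the evaluation point `a ≤ ρ`, we have `Y(a) ≤ H(a, Y(a))` componentwise. -/
lemma eval_le_Hval (S : PosSystem m) (sol : GFSol S) (hm : 1 ≤ m) (hwf : IsWF S) {a : ℝ}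
    (ha : 0 ≤ a) (haρ : ENNReal.ofReal a ≤ sol.rad) (hconvY : EvalConv sol.y a)
    (hDom : ConvAt S (vec a (eval sol.y a))) (i : Fin m) :
    eval sol.y a i ≤ Hval S (vec a (eval sol.y a)) i := by
  rcases eq_or_lt_of_le ha with h0 | hapos
  · -- a = 0
    subst h0
    rw [sol.init]
    exact uIter_le_next S hwf m (le_refl m) i
  · -- 0 < a
    apply Summable.tsum_le_of_sum_le (hconvY i)
    intro s
    have cont : Filter.Tendsto (fun x : ℝ => ∑ n ∈ s, sol.y i n * x ^ n) (nhdsWithin a (Set.Iio a))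
        (nhds (∑ n ∈ s, sol.y i n * a ^ n)) :=
      ((Continuous.tendsto (by continuity) a).mono_left nhdsWithin_le_nhds)
    refine le_of_tendsto cont ?_
    filter_upwards [Ioo_mem_nhdsLT_of_mem (Set.mem_Ioc.mpr ⟨hapos, le_refl a⟩)] with x hx
    have hx0 : (0 : ℝ) ≤ x := le_of_lt hx.1
    have hxa : x < a := hx.2
    have hxrad : ENNReal.ofReal x < ⨅ i, radius (sol.y i) :=
      lt_of_lt_of_le ((ENNReal.ofReal_lt_ofReal_iff hapos).mpr hxa) haρ
    have hsumx : ∀ j, Summable fun n => sol.y j n * x ^ n := fun j =>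
      coeff_summable_of_le (sol.nonneg j) hx0 hxa.le (hconvY j)
    calc ∑ n ∈ s, sol.y i n * x ^ n
        ≤ eval sol.y x i :=
          Summable.sum_le_tsum s (fun n _ => mul_nonneg (sol.nonneg i n) (pow_nonneg hx0 n)) (hsumx i)
      _ = Hval S (vec x (eval sol.y x)) i := by conv_lhs => rw [sol.fixed x hx0 hxrad]
      _ ≤ Hval S (vec a (eval sol.y a)) i := by
          apply Hval_mono S i (vec_nonneg hx0 (eval_nonneg sol.nonneg hx0))
            (vec_le' hxa.le (eval_le sol.nonneg hx0 hxa.le hconvY))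
            (sol.conv x hx0 hxrad i) (hDom i)

end Fixpoint

section MatrixFacts

open Matrix in
section
open scoped Matrix

attribute [local instance] Matrix.linftyOpNormedAddCommGroup Matrix.linftyOpNormedRing
  Matrix.linftyOpNormedAlgebra

variable {N : Type*} [Fintype N] [DecidableEq N]

lemma entry_norm_le (M : Matrix N N ℂ) (i j : N) : ‖M i j‖ ≤ ‖M‖ := by
  rw [Matrix.linfty_opNorm_def]
  have h1 : ‖M i j‖₊ ≤ ∑ j', ‖M i j'‖₊ :=
    Finset.single_le_sum (f := fun j' => ‖M i j'‖₊) (fun _ _ => zero_le) (Finset.mem_univ j)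
  have h2 : (∑ j', ‖M i j'‖₊) ≤ Finset.univ.sup (fun i => ∑ j', ‖M i j'‖₊) :=
    Finset.le_sup (f := fun i => ∑ j', ‖M i j'‖₊) (Finset.mem_univ i)
  exact_mod_cast h1.trans h2

lemma map_pow_ofReal (A : Matrix N N ℝ) (k : ℕ) :
    (A ^ k).map Complex.ofReal = (A.map Complex.ofReal) ^ k := by
  have h : ∀ B : Matrix N N ℝ, B.map Complex.ofReal = Complex.ofRealHom.mapMatrix B :=
    fun B => rfl
  rw [h, h, map_pow]

lemma isUnit_one_sub_det {A : Matrix N N ℝ} (h : specRad A < 1) :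
    IsUnit (1 - A).det := by
  have h1 : (1 : ℂ) ∉ spectrum ℂ (A.map Complex.ofReal) := by
    intro hmem
    have hle : (‖(1 : ℂ)‖₊ : ℝ≥0∞) ≤ spectralRadius ℂ (A.map Complex.ofReal) :=
      le_iSup₂ (f := fun k (_ : k ∈ spectrum ℂ (A.map Complex.ofReal)) => (‖k‖₊ : ℝ≥0∞)) 1 hmem
    simp only [nnnorm_one, ENNReal.coe_one] at hle
    exact absurd (lt_of_le_of_lt hle h) (lt_irrefl _)
  rw [spectrum.notMem_iff] at h1
  have hms : (1 : Matrix N N ℂ) - A.map Complex.ofReal = (1 - A).map Complex.ofReal := by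
    rw [Matrix.map_sub _ (fun a b => by push_cast; ring),
      Matrix.map_one _ (by simp) (by simp)]
  rw [_root_.map_one, hms] at h1
  have hdet := (Matrix.isUnit_iff_isUnit_det _).mp h1
  have hfun : (Complex.ofReal : ℝ → ℂ) = ⇑Complex.ofRealHom := rfl
  rw [hfun, ← RingHom.mapMatrix_apply, ← RingHom.map_det] at hdet
  have hne : (1 - A).det ≠ 0 := by
    intro h0
    rw [h0] at hdet
    simp at hdet
  exact isUnit_iff_ne_zero.mpr hne

lemma exists_pow_norm_lt_one {A : Matrix N N ℝ} (h : specRad A < 1) :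
    ∃ k : ℕ, 1 ≤ k ∧ ‖(A.map Complex.ofReal) ^ k‖ < 1 := by
  have hg := spectrum.pow_nnnorm_pow_one_div_tendsto_nhds_spectralRadius
    (A.map Complex.ofReal)
  have hev : ∀ᶠ k : ℕ in Filter.atTop,
      (‖(A.map Complex.ofReal) ^ k‖₊ : ℝ≥0∞) ^ (1 / (k : ℝ)) < 1 :=
    hg.eventually_lt_const h
  obtain ⟨k, hk1, hk2⟩ := (hev.and (Filter.eventually_ge_atTop 1)).exists
  refine ⟨k, hk2, ?_⟩
  by_contra hge
  push_neg at hge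
  have h1 : (1 : ℝ≥0∞) ≤ (‖(A.map Complex.ofReal) ^ k‖₊ : ℝ≥0∞) := by
    rw [← ENNReal.coe_one, ENNReal.coe_le_coe]
    exact_mod_cast hge
  have h2 : (1 : ℝ≥0∞) ≤ (‖(A.map Complex.ofReal) ^ k‖₊ : ℝ≥0∞) ^ (1 / (k : ℝ)) := by
    calc (1 : ℝ≥0∞) = 1 ^ (1 / (k : ℝ)) := (ENNReal.one_rpow _).symm
    _ ≤ _ := ENNReal.rpow_le_rpow h1 (by positivity)
  exact absurd (lt_of_le_of_lt h2 hk1) (lt_irrefl _)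

lemma mulVec_le_of_le {A : Matrix N N ℝ} (hA : ∀ i j, 0 ≤ A i j) {v w : N → ℝ}
    (hvw : ∀ j, v j ≤ w j) (i : N) : (A *ᵥ v) i ≤ (A *ᵥ w) i := by
  simp only [Matrix.mulVec, dotProduct]
  exact Finset.sum_le_sum fun j _ => mul_le_mul_of_nonneg_left (hvw j) (hA i j)

lemma pow_entry_nonneg {A : Matrix N N ℝ} (hA : ∀ i j, 0 ≤ A i j) (k : ℕ) :
    ∀ i j, 0 ≤ (A ^ k) i j := by
  induction k with
  | zero => intro i j; rw [pow_zero]; rw [Matrix.one_apply]; split <;> norm_num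
  | succ k ih =>
      intro i j
      rw [pow_succ, Matrix.mul_apply]
      exact Finset.sum_nonneg fun l _ => mul_nonneg (ih i l) (hA l j)

/-- Inverse positivity: if `ρ(A) < 1`, `A ≥ 0` and `(1 - A) *ᵥ w ≥ 0`, then `w ≥ 0`. -/
lemma nonneg_of_one_sub_mulVec_nonneg {A : Matrix N N ℝ} (hA : ∀ i j, 0 ≤ A i j)
    (h : specRad A < 1) {w : N → ℝ} (hw : ∀ i, 0 ≤ ((1 - A) *ᵥ w) i) : ∀ i, 0 ≤ w i := by
  have hAw : ∀ i, (A *ᵥ w) i ≤ w i := by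
    intro i
    have := hw i
    rw [Matrix.sub_mulVec, Matrix.one_mulVec] at this
    have : 0 ≤ w i - (A *ᵥ w) i := this
    linarith
  have hpow : ∀ k i, ((A ^ k) *ᵥ w) i ≤ w i := by
    intro k
    induction k with
    | zero => intro i; rw [pow_zero, Matrix.one_mulVec]
    | succ k ih =>
        intro i
        have h1 : ((A ^ (k + 1)) *ᵥ w) i = (A *ᵥ ((A ^ k) *ᵥ w)) i := by
          rw [Matrix.mulVec_mulVec, ← pow_succ']
        rw [h1]
        calc (A *ᵥ ((A ^ k) *ᵥ w)) i ≤ (A *ᵥ w) i := mulVec_le_of_le hA ih i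
          _ ≤ w i := hAw i
  obtain ⟨k, hk1, hkn⟩ := exists_pow_norm_lt_one h
  set r : ℝ := ‖(A.map Complex.ofReal) ^ k‖ with hr
  have hr0 : 0 ≤ r := norm_nonneg _
  set C : ℝ := ∑ j, |w j| with hC
  have hC0 : 0 ≤ C := Finset.sum_nonneg fun j _ => abs_nonneg _
  have hbound : ∀ t : ℕ, ∀ i, -(C * r ^ t) ≤ (((A ^ k) ^ t) *ᵥ w) i := by
    intro t i
    have hentry : ∀ i' j', |((A ^ k) ^ t) i' j'| ≤ r ^ t := by
      intro i' j'
      rcases Nat.eq_zero_or_pos t with rfl | ht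
      · simp only [pow_zero]
        rw [Matrix.one_apply]
        split <;> simp
      · have h1 : (((A ^ k) ^ t).map Complex.ofReal) = ((A.map Complex.ofReal) ^ k) ^ t := by
          rw [map_pow_ofReal, map_pow_ofReal]
        have h2 : ‖(((A ^ k) ^ t).map Complex.ofReal) i' j'‖ ≤ r ^ t := by
          calc ‖(((A ^ k) ^ t).map Complex.ofReal) i' j'‖
              ≤ ‖((A ^ k) ^ t).map Complex.ofReal‖ := entry_norm_le _ i' j'
            _ = ‖((A.map Complex.ofReal) ^ k) ^ t‖ := by rw [h1]
            _ ≤ ‖(A.map Complex.ofReal) ^ k‖ ^ t := norm_pow_le' _ ht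
            _ = r ^ t := rfl
        simpa using h2
    have habs : |(((A ^ k) ^ t) *ᵥ w) i| ≤ C * r ^ t := by
      calc |(((A ^ k) ^ t) *ᵥ w) i| = |∑ j, ((A ^ k) ^ t) i j * w j| := by
            simp [Matrix.mulVec, dotProduct]
        _ ≤ ∑ j, |((A ^ k) ^ t) i j * w j| := Finset.abs_sum_le_sum_abs _ _
        _ ≤ ∑ j, r ^ t * |w j| := Finset.sum_le_sum (fun j _ => by
            rw [abs_mul]
            exact mul_le_mul_of_nonneg_right (hentry i j) (abs_nonneg _))
        _ = C * r ^ t := by rw [← Finset.mul_sum]; ring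
    linarith [neg_abs_le ((((A ^ k) ^ t) *ᵥ w) i), (abs_le.mp habs).2]
  intro i
  have hup : ∀ t : ℕ, -(C * r ^ t) ≤ w i := fun t =>
    le_trans (hbound t i) (by rw [← pow_mul] at *; exact hpow (k * t) i)
  have hlim : Filter.Tendsto (fun t : ℕ => -(C * r ^ t)) Filter.atTop (nhds 0) := by
    have := tendsto_pow_atTop_nhds_zero_of_lt_one hr0 hkn
    have h2 := this.const_mul C
    rw [mul_zero] at h2
    simpa using h2.neg
  exact le_of_tendsto hlim (Filter.Eventually.of_forall fun t => hup t)

end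
end MatrixFacts

/-- One Newton step halves the error bound along a positive eigenvector `D`
of the Jacobian at `(a,Y(a))` with eigenvalue `Λ ≤ 1`. -/
theorem statement8 (m : ℕ) (hm : 1 ≤ m) (S : PosSystem m) (sol : GFSol S)
    (hwf : IsWF S) (a : ℝ) (ha : 0 ≤ a) (haρ : ENNReal.ofReal a ≤ sol.rad)
    (hconvY : EvalConv sol.y a)
    (hDom : ConvAt S (vec a (eval sol.y a)))
    (hJDom : JacConvAt S (vec a (eval sol.y a)))
    (D : Fin m → ℝ) (hD : ∀ i, 0 < D i) (Λ : ℝ) (hΛ : Λ ≤ 1)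
    (hEig : (jac S (vec a (eval sol.y a))).mulVec D = Λ • D)
    (y : Fin m → ℝ) (hy0 : ∀ i, 0 ≤ y i) (hyY : ∀ i, y i ≤ eval sol.y a i)
    (hyDom : ConvAt S (vec a y)) (hyJDom : JacConvAt S (vec a y))
    (hspec : lambda S (vec a y) < 1)
    (y' : Fin m → ℝ)
    (hy' : y' = y + ((1 - jac S (vec a y))⁻¹).mulVec (Hval S (vec a y) - y))
    (μ : ℝ) (hμ : 0 < μ) (hle : ∀ i, eval sol.y a i - y i ≤ μ * D i) :
    ∀ i, eval sol.y a i - y' i ≤ (μ / 2) * D i := by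
  classical
  have hYa0 : ∀ j, 0 ≤ eval sol.y a j := fun j => eval_nonneg sol.nonneg ha j
  have hvecy0 : ∀ k, 0 ≤ vec a y k := vec_nonneg ha hy0
  have hJ0 : ∀ i j, 0 ≤ jac S (vec a y) i j := fun i j => jac_nonneg S hvecy0 i j
  have hJmono : ∀ i j, jac S (vec a y) i j ≤ jac S (vec a (eval sol.y a)) i j := fun i j =>
    jac_mono S i j hvecy0 (vec_le hyY) (hyJDom i j) (hJDom i j)
  -- Step 1 : Y(a) ≤ H(a, Y(a))
  have hfix : ∀ i, eval sol.y a i ≤ Hval S (vec a (eval sol.y a)) i :=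
    eval_le_Hval S sol hm hwf ha haρ hconvY hDom
  -- Step 2 : trapezoid bound
  have htrap : ∀ i, Hval S (vec a (eval sol.y a)) i - Hval S (vec a y) i ≤
      (1 / 2) * ∑ j, (jac S (vec a y) i j + jac S (vec a (eval sol.y a)) i j) *
        (eval sol.y a j - y j) :=
    Hval_trapezoid S ha hy0 hyY hyDom hDom hyJDom hJDom
  -- Step 3 : v ≤ (μ/2) • (1 - J) D
  have hvle : ∀ i, eval sol.y a i - Hval S (vec a y) i -
      ((jac S (vec a y)).mulVec (fun j => eval sol.y a j - y j)) i ≤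
      (μ / 2) * (((1 - jac S (vec a y)).mulVec D) i) := by
    intro i
    have hJe : ((jac S (vec a y)).mulVec (fun j => eval sol.y a j - y j)) i =
        ∑ j, jac S (vec a y) i j * (eval sol.y a j - y j) := by
      simp [Matrix.mulVec, dotProduct]
    have hsplit : (1 / 2) * (∑ j, (jac S (vec a y) i j + jac S (vec a (eval sol.y a)) i j) *
          (eval sol.y a j - y j)) - ∑ j, jac S (vec a y) i j * (eval sol.y a j - y j)
        = (1 / 2) * ∑ j, (jac S (vec a (eval sol.y a)) i j - jac S (vec a y) i j) *
          (eval sol.y a j - y j) := by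
      rw [Finset.mul_sum, Finset.mul_sum, ← Finset.sum_sub_distrib]
      apply Finset.sum_congr rfl
      intro j _
      ring
    have h1 : eval sol.y a i - Hval S (vec a y) i -
        ((jac S (vec a y)).mulVec (fun j => eval sol.y a j - y j)) i ≤
        (1 / 2) * ∑ j, (jac S (vec a (eval sol.y a)) i j - jac S (vec a y) i j) *
        (eval sol.y a j - y j) := by
      rw [hJe]
      linarith [htrap i, hfix i]
    have h2 : (1 / 2) * ∑ j, (jac S (vec a (eval sol.y a)) i j - jac S (vec a y) i j) *
        (eval sol.y a j - y j) ≤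
        (1 / 2) * ∑ j, (jac S (vec a (eval sol.y a)) i j - jac S (vec a y) i j) * (μ * D j) := by
      apply mul_le_mul_of_nonneg_left _ (by norm_num)
      apply Finset.sum_le_sum
      intro j _
      exact mul_le_mul_of_nonneg_left (hle j) (sub_nonneg.mpr (hJmono i j))
    have h3 : (1 / 2) * ∑ j, (jac S (vec a (eval sol.y a)) i j - jac S (vec a y) i j) * (μ * D j)
        = (μ / 2) * (((jac S (vec a (eval sol.y a))).mulVec D) i -
            ((jac S (vec a y)).mulVec D) i) := by
      simp only [Matrix.mulVec, dotProduct]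
      rw [← Finset.sum_sub_distrib, Finset.mul_sum, Finset.mul_sum]
      apply Finset.sum_congr rfl
      intro j _
      ring
    have h4 : ((jac S (vec a (eval sol.y a))).mulVec D) i = Λ * D i := by
      rw [hEig]
      simp
    have h5 : Λ * D i ≤ D i := by nlinarith [hD i]
    have h6 : ((1 - jac S (vec a y)).mulVec D) i = D i - ((jac S (vec a y)).mulVec D) i := by
      rw [Matrix.sub_mulVec, Matrix.one_mulVec]
      rfl
    rw [h6]
    have hc := h1.trans (h2.trans (le_of_eq h3))
    rw [h4] at hc
    nlinarith [hμ.le]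
  -- Step 4 : invertibility
  have hdet : IsUnit (1 - jac S (vec a y)).det := isUnit_one_sub_det hspec
  have hJM : (1 - jac S (vec a y)) * (1 - jac S (vec a y))⁻¹ = 1 :=
    Matrix.mul_nonsing_inv _ hdet
  -- Step 5 : (1 - J) (Ya - y') = v
  have hid : (1 - jac S (vec a y)).mulVec (fun j => eval sol.y a j - y' j) =
      fun i => eval sol.y a i - Hval S (vec a y) i -
        ((jac S (vec a y)).mulVec (fun j => eval sol.y a j - y j)) i := by
    have h1 : (fun j => eval sol.y a j - y' j) = (fun j => eval sol.y a j - y j) -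
        ((1 - jac S (vec a y))⁻¹).mulVec (Hval S (vec a y) - y) := by
      funext j
      rw [hy']
      simp only [Pi.add_apply, Pi.sub_apply]
      ring
    rw [h1, Matrix.mulVec_sub, Matrix.mulVec_mulVec, hJM, Matrix.one_mulVec]
    funext i
    simp only [Pi.sub_apply, Matrix.sub_mulVec, Matrix.one_mulVec]
    ring
  -- Step 6 : conclude by inverse positivity
  have hw : ∀ i, 0 ≤ ((1 - jac S (vec a y)).mulVec
      (fun j => (μ / 2) * D j - (eval sol.y a j - y' j))) i := by
    intro i
    have hlin : ((1 - jac S (vec a y)).mulVec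
        (fun j => (μ / 2) * D j - (eval sol.y a j - y' j))) i
        = (μ / 2) * (((1 - jac S (vec a y)).mulVec D) i) -
          ((1 - jac S (vec a y)).mulVec (fun j => eval sol.y a j - y' j)) i := by
      simp only [Matrix.mulVec, dotProduct, Finset.mul_sum, ← Finset.sum_sub_distrib]
      apply Finset.sum_congr rfl
      intro j _
      ring
    rw [hlin, hid]
    linarith [hvle i]
  have hpos := nonneg_of_one_sub_mulVec_nonneg hJ0 hspec hw
  intro i
  linarith [hpos i]

end AnalyticComb
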